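/- arXiv:1312.7225 — 2 statements merged into one kernel-verified Lean document; each statement's English description precedes it below -/
import Mathlib

section
/- Let (X,𝔅,μ,T) be a measure-preserving system and let η be a ℤ-fold self-joining of μ, i.e. a probability measure on the product space (X^ℤ, 𝔅^ℤ) that is invariant under the coordinatewise map T^ℤ (defined by (T^ℤ x)_i = T(x_i)) and whose projection onto each coordinate equals μ. Then the upper metric entropy dimension of (X^ℤ, 𝔅^ℤ, η, T^ℤ) equals that of (X,𝔅,μ,T): D̄_η(X^ℤ, T^ℤ) = D̄_μ(X,T). -/
open MeasureTheory Filter Set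
open scoped ENNReal symmDiff

noncomputable section

namespace EntDim

/-- An increasing sequence of positive integers `S = {s 0 < s 1 < ⋯}` (0-indexed,
so `s n` is the `(n+1)`-st element of `S`). -/
def IsPosSeq (s : ℕ → ℕ) : Prop := StrictMono s ∧ 0 < s 0

/-- `D̄(S,τ) = limsup_n n / (s_n)^τ` (with the convention that the `n`-th term,
for `n` starting at `0`, is `(n+1)/(s n)^τ`, matching the 1-indexed definition). -/
def dimExprSup (s : ℕ → ℕ) (τ : ℝ) : ℝ≥0∞ :=
  Filter.atTop.limsup fun n : ℕ => ((n : ℝ≥0∞) + 1) / (s n : ℝ≥0∞) ^ τ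

/-- `D̲(S,τ) = liminf_n n / (s_n)^τ`. -/
def dimExprInf (s : ℕ → ℕ) (τ : ℝ) : ℝ≥0∞ :=
  Filter.atTop.liminf fun n : ℕ => ((n : ℝ≥0∞) + 1) / (s n : ℝ≥0∞) ^ τ

/-- The upper dimension `D̄(S) = inf {τ ≥ 0 | D̄(S,τ) = 0}` of a sequence. -/
def upperDim (s : ℕ → ℕ) : ℝ := sInf {τ : ℝ | 0 ≤ τ ∧ dimExprSup s τ = 0}

/-- The lower dimension `D̲(S) = inf {τ ≥ 0 | D̲(S,τ) = 0}` of a sequence. -/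
def lowerDim (s : ℕ → ℕ) : ℝ := sInf {τ : ℝ | 0 ≤ τ ∧ dimExprInf s τ = 0}

variable {X : Type*} [MeasurableSpace X]

/-- `P : ι → Set X` is a finite measurable partition of `X`. -/
def IsPartition {ι : Type*} [Fintype ι] (P : ι → Set X) : Prop :=
  (∀ i, MeasurableSet (P i)) ∧ Pairwise (Function.onFun Disjoint P) ∧ (⋃ i, P i) = Set.univ

/-- The entropy `H_μ(⋁_{i ∈ F} T^{-f i} P)` of the join of the preimage partitions
`T^{-f i} P` over a finite index set `F`. -/
def finJoinEnt (μ : Measure X) (T : X → X) {ι : Type*} [Fintype ι] (P : ι → Set X)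
    (f : ℕ → ℕ) (F : Finset ℕ) : ℝ :=
  ∑ ω : F → ι, Real.negMulLog (μ (⋂ i : F, T^[f i.1] ⁻¹' (P (ω i)))).toReal

/-- `H_μ(⋁_{i=1}^{n} T^{-s_i} P)` (with `s` 0-indexed: this is the join over the
first `n` elements of the sequence). -/
def seqJoinEnt (μ : Measure X) (T : X → X) {ι : Type*} [Fintype ι] (P : ι → Set X)
    (s : ℕ → ℕ) (n : ℕ) : ℝ :=
  finJoinEnt μ T P s (Finset.range n)

/-- `S` is an entropy generating sequence of the partition `P`:
`liminf_n (1/n) H_μ(⋁_{i=1}^n T^{-s_i} P) > 0`. -/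
def IsEntGenSeq (μ : Measure X) (T : X → X) {ι : Type*} [Fintype ι] (P : ι → Set X)
    (s : ℕ → ℕ) : Prop :=
  IsPosSeq s ∧ 0 < Filter.atTop.liminf fun n : ℕ => seqJoinEnt μ T P s n / n

/-- `S` is a positive entropy sequence of the partition `P`:
`limsup_n (1/n) H_μ(⋁_{i=1}^n T^{-s_i} P) > 0`. -/
def IsPosEntSeq (μ : Measure X) (T : X → X) {ι : Type*} [Fintype ι] (P : ι → Set X)
    (s : ℕ → ℕ) : Prop :=
  IsPosSeq s ∧ 0 < Filter.atTop.limsup fun n : ℕ => seqJoinEnt μ T P s n / n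

/-- `D̄^e_μ(T,P)`: the supremum of upper dimensions over entropy generating sequences
of `P` (`0`, by convention `sSup ∅ = 0`, if there are none). This is the upper
entropy dimension `D̄_μ(T,P)` of the partition `P`. -/
def upperEntDimPart (μ : Measure X) (T : X → X) {ι : Type*} [Fintype ι]
    (P : ι → Set X) : ℝ :=
  sSup {d : ℝ | ∃ s : ℕ → ℕ, IsEntGenSeq μ T P s ∧ d = upperDim s}

/-- `D̲^e_μ(T,P)`: the supremum of lower dimensions over entropy generating sequences,
i.e. the lower entropy dimension `D̲_μ(T,P)` of the partition `P`. -/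
def lowerEntDimPart (μ : Measure X) (T : X → X) {ι : Type*} [Fintype ι]
    (P : ι → Set X) : ℝ :=
  sSup {d : ℝ | ∃ s : ℕ → ℕ, IsEntGenSeq μ T P s ∧ d = lowerDim s}

/-- `D̄^p_μ(T,P)`: the supremum of upper dimensions over positive entropy sequences of `P`. -/
def upperPosDimPart (μ : Measure X) (T : X → X) {ι : Type*} [Fintype ι]
    (P : ι → Set X) : ℝ :=
  sSup {d : ℝ | ∃ s : ℕ → ℕ, IsPosEntSeq μ T P s ∧ d = upperDim s}

/-- `D̲^p_μ(T,P)`: the supremum of lower dimensions over positive entropy sequences of `P`. -/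
def lowerPosDimPart (μ : Measure X) (T : X → X) {ι : Type*} [Fintype ι]
    (P : ι → Set X) : ℝ :=
  sSup {d : ℝ | ∃ s : ℕ → ℕ, IsPosEntSeq μ T P s ∧ d = lowerDim s}

/-- The upper metric entropy dimension `D̄_μ(X,T)`: the supremum of `D̄_μ(T,P)`
over all finite measurable partitions `P` of `X`. -/
def upperEntDim (μ : Measure X) (T : X → X) : ℝ :=
  sSup {d : ℝ | ∃ (k : ℕ) (P : Fin k → Set X), IsPartition P ∧ d = upperEntDimPart μ T P}

/-- The lower metric entropy dimension `D̲_μ(X,T)`. -/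
def lowerEntDim (μ : Measure X) (T : X → X) : ℝ :=
  sSup {d : ℝ | ∃ (k : ℕ) (P : Fin k → Set X), IsPartition P ∧ d = lowerEntDimPart μ T P}

/-- `D̄^p_μ(X,T)`: the supremum of `D̄^p_μ(T,P)` over all finite measurable partitions. -/
def upperPosDim (μ : Measure X) (T : X → X) : ℝ :=
  sSup {d : ℝ | ∃ (k : ℕ) (P : Fin k → Set X), IsPartition P ∧ d = upperPosDimPart μ T P}

/-- The two-set partition `{A, X \ A}`. -/
def pairPart (A : Set X) : Fin 2 → Set X := ![A, Aᶜ]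

/-- The dimension set `Dims_μ(X,T) = {D̄_μ(T,{A,Aᶜ}) : A ∈ 𝔅, 0 < μ(A) < 1}`. -/
def dimsSet (μ : Measure X) (T : X → X) : Set ℝ :=
  {d : ℝ | ∃ A : Set X, MeasurableSet A ∧ 0 < μ A ∧ μ A < 1 ∧
    d = upperEntDimPart μ T (pairPart A)}

/-- The system is null: every sequence entropy (along any increasing sequence of
positive integers, for any finite measurable partition) vanishes. -/
def IsNullSystem (μ : Measure X) (T : X → X) : Prop :=
  ∀ (k : ℕ) (P : Fin k → Set X), IsPartition P → ∀ s : ℕ → ℕ, IsPosSeq s →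
    Filter.atTop.limsup (fun n : ℕ => seqJoinEnt μ T P s n / n) = 0

end EntDim

namespace EntDim

/-!
Pulling a partition `P` of `X` back along a coordinate projection leaves every entropy
`H(⋁ᵢ T^{-sᵢ} P)` unchanged, because all coordinate marginals of `η` equal `μ`; this gives
`D̄_μ(X, T) ≤ D̄_η(X^ℤ, T^ℤ)`.

Conversely, let `s` be entropy generating for a partition `Q` of `X^ℤ`. The sets depending only on
finitely many coordinates, each read through finitely many measurable sets `𝒮` of `X`, form a
generating ring, so `Q` is `ε`-close in measure to a partition `R` all of whose atoms are
determined by a window `F` and a family `𝒮`. A Fano-type estimate bounds the entropy of the join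
of `n` translates of `Q` by that for `R` plus `n φ(ε)`, with `φ(ε) → 0`. The join of the
translates of `R` is refined by the join over `j ∈ F` of the translates of the atoms `α` of `𝒮`
pulled back along the `j`-th coordinate, so by subadditivity
`H_η(⋁ᵢ (T^ℤ)^{-sᵢ} Q) ≤ |F| H_μ(⋁ᵢ T^{-sᵢ} α) + n φ(ε)`. Once `φ(ε)` is below the liminf defining
"entropy generating", `s` is entropy generating for `α`, whence `D̄(s) ≤ D̄_μ(X, T)`.
-/

open Real
open scoped Topology

lemma negMulLog_add_le {a b : ℝ} (ha : 0 ≤ a) (hb : 0 ≤ b) :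
    negMulLog (a + b) ≤ negMulLog a + negMulLog b := by
  rcases ha.eq_or_lt with rfl | ha
  · simp
  rcases hb.eq_or_lt with rfl | hb
  · simp
  have h1 : log a ≤ log (a + b) := log_le_log ha (by linarith)
  have h2 : log b ≤ log (a + b) := log_le_log hb (by linarith)
  simp only [negMulLog, neg_mul]
  nlinarith

lemma negMulLog_sum_le {ι : Type*} (s : Finset ι) {x : ι → ℝ} (hx : ∀ i ∈ s, 0 ≤ x i) :
    negMulLog (∑ i ∈ s, x i) ≤ ∑ i ∈ s, negMulLog (x i) := by
  induction s using Finset.cons_induction with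
  | empty => simp
  | cons a s ha ih =>
    rw [Finset.forall_mem_cons] at hx
    rw [Finset.sum_cons, Finset.sum_cons]
    exact (negMulLog_add_le hx.1 (Finset.sum_nonneg hx.2)).trans (by gcongr; exact ih hx.2)

lemma negMulLog_eq_mul_neg_log (x : ℝ) : negMulLog x = x * -log x := by
  simp only [negMulLog]
  ring

lemma sum_negMulLog_le_sum_mul_neg_log {ι : Type*} [Fintype ι] {p q : ι → ℝ}
    (hp : ∀ i, 0 ≤ p i) (hq : ∀ i, 0 ≤ q i) (hpq : ∀ i, p i ≠ 0 → q i ≠ 0)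
    (hsum : ∑ i, q i ≤ ∑ i, p i) :
    ∑ i, negMulLog (p i) ≤ ∑ i, p i * -log (q i) := by
  have key : ∀ i, negMulLog (p i) - p i * -log (q i) ≤ q i - p i := by
    intro i
    rcases (hp i).eq_or_lt with h | h
    · simp [← h, hq i]
    have hqi : 0 < q i := (hq i).lt_of_ne (hpq i h.ne').symm
    have hlog := log_le_sub_one_of_pos (div_pos hqi h)
    rw [log_div hqi.ne' h.ne'] at hlog
    calc negMulLog (p i) - p i * -log (q i) = p i * (log (q i) - log (p i)) := by
          rw [negMulLog_eq_mul_neg_log]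
          ring
      _ ≤ p i * (q i / p i - 1) := by gcongr
      _ = q i - p i := by field_simp
  have := Finset.sum_le_sum fun i (_ : i ∈ Finset.univ) => key i
  rw [Finset.sum_sub_distrib, Finset.sum_sub_distrib] at this
  linarith

lemma liminf_pos_of_le_mul_add {u v : ℕ → ℝ} {A φ C : ℝ} (hA : 0 < A) (hu : ∀ n, 0 ≤ u n)
    (hv : ∀ n, v n ≤ C) (h : ∀ᶠ n in atTop, u n ≤ A * v n + φ) (hφ : φ < atTop.liminf u) :
    0 < atTop.liminf v := by
  obtain ⟨b, hφb, hb⟩ := exists_between hφ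
  have hvb : ∀ᶠ n in atTop, (b - φ) / A ≤ v n := by
    filter_upwards [eventually_lt_of_lt_liminf hb (isBoundedUnder_of ⟨0, hu⟩), h] with n hn hn'
    rw [div_le_iff₀ hA]
    linarith
  exact (div_pos (by linarith) hA).trans_le
    (le_liminf_of_le (isCoboundedUnder_ge_of_le atTop hv) hvb)

def join {Y J ι : Type*} (P : J → ι → Set Y) (ω : J → ι) : Set Y :=
  ⋂ j, P j (ω j)

section Partition

variable {Y : Type*} [MeasurableSpace Y] {ν : Measure Y} {ι κ : Type*} [Fintype ι] [Fintype κ]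
  {P : ι → Set Y}

namespace IsPartition

lemma of_mem (hm : ∀ i, MeasurableSet (P i)) (hcov : ∀ y, ∃ i, y ∈ P i)
    (hdisj : ∀ ⦃i j y⦄, y ∈ P i → y ∈ P j → i = j) : IsPartition P :=
  ⟨hm, fun _ _ hij => Set.disjoint_left.2 fun _ hi hj => hij (hdisj hi hj),
    Set.eq_univ_of_forall fun y => Set.mem_iUnion.2 (hcov y)⟩

lemma exists_mem (hP : IsPartition P) (y : Y) : ∃ i, y ∈ P i :=
  Set.mem_iUnion.1 (hP.2.2 ▸ Set.mem_univ y)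

lemma eq_of_mem (hP : IsPartition P) {i j : ι} {y : Y} (hi : y ∈ P i) (hj : y ∈ P j) :
    i = j := by
  by_contra h
  exact Set.disjoint_left.1 (hP.2.1 h) hi hj

lemma nonempty_index [NeZero ν] (hP : IsPartition P) : Nonempty ι := by
  obtain ⟨y⟩ := ν.nonempty_of_neZero
  exact ⟨(hP.exists_mem y).choose⟩

lemma preimage {Z : Type*} [MeasurableSpace Z] (hP : IsPartition P) {g : Z → Y}
    (hg : Measurable g) : IsPartition fun i => g ⁻¹' P i :=
  of_mem (fun i => hg (hP.1 i)) (fun z => hP.exists_mem (g z)) fun _ _ _ => hP.eq_of_mem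

lemma comp_equiv (hP : IsPartition P) (e : κ ≃ ι) : IsPartition (P ∘ e) :=
  of_mem (fun _ => hP.1 _)
    (fun y => ⟨e.symm (hP.exists_mem y).choose, by simpa using (hP.exists_mem y).choose_spec⟩)
    fun _ _ _ hi hj => e.injective (hP.eq_of_mem hi hj)

lemma inter {R : κ → Set Y} (hP : IsPartition P) (hR : IsPartition R) :
    IsPartition fun z : ι × κ => P z.1 ∩ R z.2 :=
  of_mem (fun z => (hP.1 z.1).inter (hR.1 z.2))
    (fun y => ⟨((hP.exists_mem y).choose, (hR.exists_mem y).choose),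
      (hP.exists_mem y).choose_spec, (hR.exists_mem y).choose_spec⟩)
    fun _ _ _ hi hj => Prod.ext (hP.eq_of_mem hi.1 hj.1) (hR.eq_of_mem hi.2 hj.2)

lemma sum_measureReal_le [IsFiniteMeasure ν] (hP : IsPartition P) (s : Finset ι) {A : Set Y}
    (hA : ∀ i ∈ s, P i ⊆ A) : ∑ i ∈ s, ν.real (P i) ≤ ν.real A := by
  rw [← measureReal_biUnion_finset (fun i _ j _ hij => hP.2.1 hij) fun i _ => hP.1 i]
  exact measureReal_mono (Set.iUnion₂_subset hA)

lemma sum_measureReal_inter [IsFiniteMeasure ν] (hP : IsPartition P) {A : Set Y}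
    (hA : MeasurableSet A) : ∑ i, ν.real (A ∩ P i) = ν.real A := by
  rw [← measureReal_biUnion_finset (fun i _ j _ hij => (hP.2.1 hij).mono
    Set.inter_subset_right Set.inter_subset_right) fun i _ => hA.inter (hP.1 i)]
  simp [← Set.inter_iUnion, hP.2.2]

lemma sum_measureReal [IsProbabilityMeasure ν] (hP : IsPartition P) :
    ∑ i, ν.real (P i) = 1 := by
  simpa using hP.sum_measureReal_inter (ν := ν) MeasurableSet.univ

lemma measureReal_eq_sum_of_refines [IsFiniteMeasure ν] [DecidableEq ι] {P' : κ → Set Y}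
    (hP : IsPartition P) (hP' : IsPartition P') (u : κ → ι) (hu : ∀ b, P' b ⊆ P (u b))
    (i : ι) : ν.real (P i) = ∑ b with u b = i, ν.real (P' b) := by
  rw [← hP'.sum_measureReal_inter (hP.1 i), Finset.sum_filter]
  refine Finset.sum_congr rfl fun b _ => ?_
  split_ifs with h
  · rw [Set.inter_eq_right.2 (h ▸ hu b)]
  · rw [Set.disjoint_iff_inter_eq_empty.1 ((hP.2.1 (Ne.symm h)).mono_right (hu b)),
      measureReal_empty]

lemma sum_mul_comp_of_refines [IsFiniteMeasure ν] {P' : κ → Set Y} (hP : IsPartition P)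
    (hP' : IsPartition P') (u : κ → ι) (hu : ∀ b, P' b ⊆ P (u b)) (g : ι → ℝ) :
    ∑ b, ν.real (P' b) * g (u b) = ∑ i, ν.real (P i) * g i := by
  classical
  rw [← Finset.sum_fiberwise Finset.univ u]
  refine Finset.sum_congr rfl fun i _ => ?_
  rw [hP.measureReal_eq_sum_of_refines hP' u hu i, Finset.sum_mul]
  exact Finset.sum_congr rfl fun b hb => by rw [(Finset.mem_filter.1 hb).2]

end IsPartition

lemma isPartition_join {J : Type*} [Fintype J] [DecidableEq J] {P : J → ι → Set Y}
    (hP : ∀ j, IsPartition (P j)) : IsPartition (join P) :=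
  .of_mem (fun _ => MeasurableSet.iInter fun j => (hP j).1 _)
    (fun y => ⟨fun j => ((hP j).exists_mem y).choose,
      Set.mem_iInter.2 fun j => ((hP j).exists_mem y).choose_spec⟩)
    fun _ _ _ hi hj => funext fun j =>
      (hP j).eq_of_mem (Set.mem_iInter.1 hi j) (Set.mem_iInter.1 hj j)

lemma isPartition_fiber {β : Type*} [Fintype β] [MeasurableSpace β] [MeasurableSingletonClass β]
    {f : Y → β} (hf : Measurable f) : IsPartition fun b => f ⁻¹' {b} :=
  .of_mem (fun _ => hf (measurableSet_singleton _)) (fun y => ⟨f y, rfl⟩)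
    fun _ _ _ hi hj => hi.symm.trans hj

end Partition

section Entropy

variable {Y : Type*} [MeasurableSpace Y] {ν : Measure Y} {ι κ : Type*} [Fintype ι] [Fintype κ]

def entropy (ν : Measure Y) (P : ι → Set Y) : ℝ :=
  ∑ i, negMulLog (ν.real (P i))

lemma entropy_nonneg [IsProbabilityMeasure ν] (P : ι → Set Y) : 0 ≤ entropy ν P :=
  Finset.sum_nonneg fun _ _ => negMulLog_nonneg measureReal_nonneg measureReal_le_one

lemma entropy_comp_equiv (P : ι → Set Y) (e : κ ≃ ι) : entropy ν (P ∘ e) = entropy ν P :=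
  Fintype.sum_equiv e _ _ fun _ => rfl

namespace IsPartition

variable {P : ι → Set Y}

lemma entropy_le_of_refines [IsFiniteMeasure ν] {P' : κ → Set Y} (hP : IsPartition P)
    (hP' : IsPartition P') (u : κ → ι) (hu : ∀ b, P' b ⊆ P (u b)) :
    entropy ν P ≤ entropy ν P' := by
  classical
  calc entropy ν P = ∑ i, negMulLog (∑ b with u b = i, ν.real (P' b)) := by
        simp only [entropy, hP.measureReal_eq_sum_of_refines hP' u hu]
    _ ≤ ∑ i, ∑ b with u b = i, negMulLog (ν.real (P' b)) :=
        Finset.sum_le_sum fun i _ => negMulLog_sum_le _ fun _ _ => measureReal_nonneg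
    _ = entropy ν P' := Finset.sum_fiberwise _ _ _

lemma entropy_le_log_card [IsProbabilityMeasure ν] (hP : IsPartition P) :
    entropy ν P ≤ log (Fintype.card ι) := by
  have := hP.nonempty_index (ν := ν)
  have hk : (0 : ℝ) < Fintype.card ι := by exact_mod_cast Fintype.card_pos
  calc entropy ν P ≤ ∑ i, ν.real (P i) * -log (Fintype.card ι : ℝ)⁻¹ :=
        sum_negMulLog_le_sum_mul_neg_log (fun _ => measureReal_nonneg) (fun _ => by positivity)
          (fun _ _ => by positivity) (by simp [hP.sum_measureReal, hk.ne'])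
    _ = log (Fintype.card ι) := by
        rw [← Finset.sum_mul, hP.sum_measureReal, log_inv, neg_neg, one_mul]

end IsPartition

lemma entropy_join_le [IsProbabilityMeasure ν] {J : Type*} [Fintype J] [DecidableEq J]
    {P : J → ι → Set Y} (hP : ∀ j, IsPartition (P j)) :
    entropy ν (join P) ≤ ∑ j, entropy ν (P j) := by
  have hpos : ∀ ω j, ν.real (join P ω) ≠ 0 → 0 < ν.real (P j (ω j)) := fun ω j h =>
    (measureReal_nonneg.lt_of_ne (Ne.symm h)).trans_le (measureReal_mono (Set.iInter_subset _ j))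
  have hsum : ∑ ω : J → ι, ∏ j, ν.real (P j (ω j)) ≤ ∑ ω, ν.real (join P ω) := by
    rw [← Fintype.prod_sum fun j a => ν.real (P j a), (isPartition_join hP).sum_measureReal]
    simp [(hP _).sum_measureReal]
  calc entropy ν (join P) ≤ ∑ ω, ν.real (join P ω) * -log (∏ j, ν.real (P j (ω j))) :=
        sum_negMulLog_le_sum_mul_neg_log (fun _ => measureReal_nonneg)
          (fun _ => Finset.prod_nonneg fun _ _ => measureReal_nonneg)
          (fun ω hω => Finset.prod_ne_zero_iff.2 fun j _ => (hpos ω j hω).ne') hsum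
    _ = ∑ j, ∑ ω, ν.real (join P ω) * -log (ν.real (P j (ω j))) := by
        rw [Finset.sum_comm]
        refine Finset.sum_congr rfl fun ω _ => ?_
        by_cases h : ν.real (join P ω) = 0
        · simp [h]
        · rw [log_prod fun j _ => (hpos ω j h).ne', ← Finset.sum_neg_distrib, Finset.mul_sum]
    _ = ∑ j, entropy ν (P j) := by
        refine Finset.sum_congr rfl fun j _ => ?_
        rw [(hP j).sum_mul_comp_of_refines (isPartition_join hP) (fun ω => ω j)
          (fun ω => Set.iInter_subset _ j) fun a => -log (ν.real (P j a))]
        simp [entropy, negMulLog_eq_mul_neg_log]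

/-- Gibbs' inequality against the weights `ν (R b) * c a b`, for a sub-stochastic kernel `c`. -/
lemma entropy_inter_le [IsProbabilityMeasure ν] {P : ι → Set Y} {R : κ → Set Y}
    (hP : IsPartition P) (hR : IsPartition R) {c : ι → κ → ℝ} (hc : ∀ a b, 0 < c a b)
    (hc1 : ∀ b, ∑ a, c a b ≤ 1) :
    entropy ν (fun z : ι × κ => P z.1 ∩ R z.2)
      ≤ entropy ν R + ∑ z : ι × κ, ν.real (P z.1 ∩ R z.2) * -log (c z.1 z.2) := by
  have hPR := hP.inter hR
  have hpos : ∀ z : ι × κ, ν.real (P z.1 ∩ R z.2) ≠ 0 → 0 < ν.real (R z.2) := fun z h =>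
    (measureReal_nonneg.lt_of_ne (Ne.symm h)).trans_le (measureReal_mono Set.inter_subset_right)
  have hsum : ∑ z : ι × κ, ν.real (R z.2) * c z.1 z.2 ≤ ∑ z : ι × κ, ν.real (P z.1 ∩ R z.2) := by
    rw [hPR.sum_measureReal, Fintype.sum_prod_type_right]
    calc ∑ b, ∑ a, ν.real (R b) * c a b ≤ ∑ b, ν.real (R b) * 1 := by
          simp only [← Finset.mul_sum]
          gcongr with b
          exact hc1 b
      _ = 1 := by simp [hR.sum_measureReal]
  calc entropy ν _
      ≤ ∑ z : ι × κ, ν.real (P z.1 ∩ R z.2) * -log (ν.real (R z.2) * c z.1 z.2) :=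
        sum_negMulLog_le_sum_mul_neg_log (fun _ => measureReal_nonneg)
          (fun _ => mul_nonneg measureReal_nonneg (hc _ _).le)
          (fun z hz => mul_ne_zero (hpos z hz).ne' (hc _ _).ne') hsum
    _ = ∑ z : ι × κ, ν.real (P z.1 ∩ R z.2) * -log (ν.real (R z.2))
          + ∑ z : ι × κ, ν.real (P z.1 ∩ R z.2) * -log (c z.1 z.2) := by
        rw [← Finset.sum_add_distrib]
        refine Finset.sum_congr rfl fun z _ => ?_
        by_cases h : ν.real (P z.1 ∩ R z.2) = 0
        · simp [h]
        · rw [log_mul (hpos z h).ne' (hc _ _).ne']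
          ring
    _ = entropy ν R + _ := by
        rw [hR.sum_mul_comp_of_refines hPR Prod.snd (fun _ => Set.inter_subset_right)
          fun b => -log (ν.real (R b))]
        simp [entropy, negMulLog_eq_mul_neg_log]

end Entropy

section Fano

variable {Y : Type*} [MeasurableSpace Y] {ν : Measure Y} {κ : Type*} [Fintype κ] [DecidableEq κ]

def fanoTerm (k : ℕ) (ε : ℝ) : ℝ := negMulLog ε + ε * log k - log (1 - ε)

lemma exists_fanoTerm_lt (k : ℕ) {c : ℝ} (hc : 0 < c) :
    ∃ ε, 0 < ε ∧ ε < 1 ∧ fanoTerm k ε < c := by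
  have hcont : ContinuousAt (fanoTerm k) 0 :=
    (continuous_negMulLog.continuousAt.add (continuous_id.mul continuous_const).continuousAt).sub
      ((continuous_const.sub continuous_id).continuousAt.log (by norm_num))
  have h0 : fanoTerm k 0 < c := by simpa [fanoTerm] using hc
  have hev : ∀ᶠ ε in 𝓝[>] 0, fanoTerm k ε < c ∧ ε < 1 :=
    ((hcont.eventually (gt_mem_nhds h0)).and (gt_mem_nhds zero_lt_one)).filter_mono
      nhdsWithin_le_nhds
  obtain ⟨ε, ⟨h1, h2⟩, h3⟩ := (hev.and self_mem_nhdsWithin).exists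
  exact ⟨ε, h3, h2, h1⟩

/-- The guessing kernel of Fano's inequality. -/
def fanoWeight (ε : ℝ) (a b : κ) : ℝ := if a = b then 1 - ε else ε / Fintype.card κ

variable [Nonempty κ] {ε : ℝ}

lemma fanoWeight_pos (hε0 : 0 < ε) (hε1 : ε < 1) (a b : κ) : 0 < fanoWeight ε a b := by
  unfold fanoWeight
  split_ifs
  · linarith
  · exact div_pos hε0 (by exact_mod_cast Fintype.card_pos)

lemma sum_fanoWeight_le_one (hε0 : 0 ≤ ε) (b : κ) : ∑ a, fanoWeight ε a b ≤ 1 := by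
  have hk : (0 : ℝ) < Fintype.card κ := by exact_mod_cast Fintype.card_pos
  have hsum : ∑ a, fanoWeight ε a b = 1 - ε / Fintype.card κ :=
    calc ∑ a, fanoWeight ε a b
        = ∑ a, (ε / Fintype.card κ + if a = b then 1 - ε - ε / Fintype.card κ else 0) := by
          refine Finset.sum_congr rfl fun a _ => ?_
          unfold fanoWeight
          split_ifs <;> ring
      _ = 1 - ε / Fintype.card κ := by
          rw [Finset.sum_add_distrib, Finset.sum_ite_eq', Finset.sum_const, Finset.card_univ,
            nsmul_eq_mul, if_pos (Finset.mem_univ _)]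
          field_simp
          ring
  rw [hsum]
  linarith [div_nonneg hε0 hk.le]

lemma sum_measureReal_mul_neg_log_fanoWeight_le [IsProbabilityMeasure ν] {ζ : Type*}
    [Fintype ζ] {W : ζ → Set Y} (hW : IsPartition W) (f g : ζ → κ) {D : Set Y}
    (hD : ∀ z, f z ≠ g z → W z ⊆ D) (hε0 : 0 < ε) (hε1 : ε < 1) (hDε : ν.real D ≤ ε) :
    ∑ z, ν.real (W z) * -log (fanoWeight ε (f z) (g z)) ≤ fanoTerm (Fintype.card κ) ε := by
  classical
  set L₁ := -log (1 - ε)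
  set L₂ := log (Fintype.card κ) - log ε
  have hL₁ : 0 ≤ L₁ := neg_nonneg.2 (log_nonpos (by linarith) (by linarith))
  have hL₂ : 0 ≤ L₂ := by
    have := log_nonpos hε0.le hε1.le
    have := log_natCast_nonneg (Fintype.card κ)
    linarith
  have hpoint : ∀ z, ν.real (W z) * -log (fanoWeight ε (f z) (g z))
      ≤ ν.real (W z) * L₁ + if f z ≠ g z then ν.real (W z) * L₂ else 0 := by
    intro z
    by_cases h : f z = g z
    · simp [fanoWeight, h, L₁]
    · simp only [fanoWeight, h, if_false, ne_eq, not_false_eq_true, if_true]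
      rw [log_div hε0.ne' (by exact_mod_cast Fintype.card_ne_zero)]
      nlinarith [mul_nonneg (measureReal_nonneg (μ := ν) (s := W z)) hL₁]
  calc _ ≤ ∑ z, (ν.real (W z) * L₁ + if f z ≠ g z then ν.real (W z) * L₂ else 0) :=
        Finset.sum_le_sum fun z _ => hpoint z
    _ = L₁ + (∑ z with f z ≠ g z, ν.real (W z)) * L₂ := by
        rw [Finset.sum_add_distrib, ← Finset.sum_mul, hW.sum_measureReal, one_mul,
          ← Finset.sum_filter, Finset.sum_mul]
    _ ≤ L₁ + ε * L₂ := by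
        gcongr
        exact (hW.sum_measureReal_le _ fun z hz => hD z (Finset.mem_filter.1 hz).2).trans hDε
    _ = fanoTerm (Fintype.card κ) ε := by
        simp only [fanoTerm, negMulLog, L₁, L₂]
        ring

lemma entropy_join_le_of_close [IsProbabilityMeasure ν] {J : Type*} [Fintype J] [DecidableEq J]
    {Q R : J → κ → Set Y} (hQ : ∀ j, IsPartition (Q j)) (hR : ∀ j, IsPartition (R j))
    (hε0 : 0 < ε) (hε1 : ε < 1) (hclose : ∀ j, ν.real (⋃ a, Q j a \ R j a) ≤ ε) :
    entropy ν (join Q) ≤ entropy ν (join R) + Fintype.card J * fanoTerm (Fintype.card κ) ε := by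
  have hQJ := isPartition_join hQ
  have hRJ := isPartition_join hR
  have hW := hQJ.inter hRJ
  have hc1 : ∀ ω : J → κ, ∑ ω' : J → κ, ∏ j, fanoWeight ε (ω' j) (ω j) ≤ 1 := fun ω => by
    rw [← Fintype.prod_sum fun j a => fanoWeight ε a (ω j)]
    exact Finset.prod_le_one (fun _ _ => Finset.sum_nonneg fun _ _ =>
      (fanoWeight_pos hε0 hε1 _ _).le) fun _ _ => sum_fanoWeight_le_one hε0.le _
  calc entropy ν (join Q)
      ≤ entropy ν (fun z : (J → κ) × (J → κ) => join Q z.1 ∩ join R z.2) :=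
        hQJ.entropy_le_of_refines hW Prod.fst fun _ => Set.inter_subset_left
    _ ≤ entropy ν (join R) + ∑ z : (J → κ) × (J → κ),
          ν.real (join Q z.1 ∩ join R z.2) * -log (∏ j, fanoWeight ε (z.1 j) (z.2 j)) :=
        entropy_inter_le hQJ hRJ (c := fun ω ω' => ∏ j, fanoWeight ε (ω j) (ω' j))
          (fun _ _ => Finset.prod_pos fun _ _ => fanoWeight_pos hε0 hε1 _ _) hc1
    _ = entropy ν (join R) + ∑ j, ∑ z : (J → κ) × (J → κ),
          ν.real (join Q z.1 ∩ join R z.2) * -log (fanoWeight ε (z.1 j) (z.2 j)) := by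
        rw [Finset.sum_comm]
        congr 1
        refine Finset.sum_congr rfl fun z _ => ?_
        rw [log_prod fun _ _ => (fanoWeight_pos hε0 hε1 _ _).ne', ← Finset.sum_neg_distrib,
          Finset.mul_sum]
    _ ≤ entropy ν (join R) + ∑ _j : J, fanoTerm (Fintype.card κ) ε := by
        gcongr with j
        refine sum_measureReal_mul_neg_log_fanoWeight_le hW (fun z => z.1 j) (fun z => z.2 j)
          (fun z hz x hx => ?_) hε0 hε1 (hclose j)
        exact Set.mem_iUnion.2 ⟨z.1 j, Set.mem_iInter.1 hx.1 j, fun h =>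
          hz ((hR j).eq_of_mem h (Set.mem_iInter.1 hx.2 j))⟩
    _ = entropy ν (join R) + Fintype.card J * fanoTerm (Fintype.card κ) ε := by simp

end Fano

section Sequence

variable {Y : Type*} [MeasurableSpace Y] {ν : Measure Y} {ι κ : Type*} [Fintype ι] [Fintype κ]
  {T : Y → Y} {s : ℕ → ℕ}

lemma seqJoinEnt_eq_entropy (P : ι → Set Y) (n : ℕ) :
    seqJoinEnt ν T P s n = entropy ν (join fun (i : Finset.range n) a => T^[s i] ⁻¹' P a) :=
  rfl

lemma seqJoinEnt_nonneg [IsProbabilityMeasure ν] (P : ι → Set Y) (n : ℕ) :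
    0 ≤ seqJoinEnt ν T P s n :=
  entropy_nonneg _

lemma seqJoinEnt_comp_equiv (P : ι → Set Y) (e : κ ≃ ι) (n : ℕ) :
    seqJoinEnt ν T (P ∘ e) s n = seqJoinEnt ν T P s n :=
  Fintype.sum_equiv (Equiv.arrowCongr (Equiv.refl _) e) _ _ fun _ => rfl

namespace IsPartition

variable {P : ι → Set Y}

lemma iterate_join (hP : IsPartition P) (hT : Measurable T) (n : ℕ) :
    IsPartition (join fun (i : Finset.range n) a => T^[s i] ⁻¹' P a) :=
  isPartition_join fun i => hP.preimage (hT.iterate (s i))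

lemma seqJoinEnt_le [IsProbabilityMeasure ν] (hP : IsPartition P) (hT : Measurable T) (n : ℕ) :
    seqJoinEnt ν T P s n ≤ n * log (Fintype.card ι) := by
  have h := (hP.iterate_join hT n (s := s)).entropy_le_log_card (ν := ν)
  rwa [Fintype.card_fun, Fintype.card_coe, Finset.card_range, Nat.cast_pow, log_pow] at h

lemma seqJoinEnt_le_of_refines [IsFiniteMeasure ν] {P' : κ → Set Y} (hP : IsPartition P)
    (hP' : IsPartition P') (hT : Measurable T) (u : κ → ι) (hu : ∀ b, P' b ⊆ P (u b))
    (n : ℕ) : seqJoinEnt ν T P s n ≤ seqJoinEnt ν T P' s n :=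
  (hP.iterate_join hT n).entropy_le_of_refines (hP'.iterate_join hT n) (u ∘ ·)
    fun _ => Set.iInter_mono fun _ => Set.preimage_mono (hu _)

lemma seqJoinEnt_le_of_close [IsProbabilityMeasure ν] [Nonempty ι] [DecidableEq ι]
    {R : ι → Set Y} (hP : IsPartition P) (hR : IsPartition R) (hT : MeasurePreserving T ν ν)
    {ε : ℝ} (hε0 : 0 < ε) (hε1 : ε < 1) (hclose : ν.real (⋃ a, P a \ R a) ≤ ε) (n : ℕ) :
    seqJoinEnt ν T P s n ≤ seqJoinEnt ν T R s n + n * fanoTerm (Fintype.card ι) ε := by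
  have hD : MeasurableSet (⋃ a, P a \ R a) := .iUnion fun a => (hP.1 a).diff (hR.1 a)
  have h := entropy_join_le_of_close (ν := ν) (J := Finset.range n)
    (fun i => hP.preimage (hT.iterate (s i)).measurable)
    (fun i => hR.preimage (hT.iterate (s i)).measurable) hε0 hε1 fun i => by
      rw [show (⋃ a, T^[s i] ⁻¹' P a \ T^[s i] ⁻¹' R a) = T^[s i] ⁻¹' ⋃ a, P a \ R a by
        simp [Set.preimage_sdiff], (hT.iterate _).measureReal_preimage hD.nullMeasurableSet]
      exact hclose
  rwa [Fintype.card_coe, Finset.card_range] at h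

end IsPartition

lemma seqJoinEnt_join_le [IsProbabilityMeasure ν] {J : Type*} [Fintype J] [DecidableEq J]
    {P : J → ι → Set Y} (hP : ∀ j, IsPartition (P j)) (hT : Measurable T) (n : ℕ) :
    seqJoinEnt ν T (join P) s n ≤ ∑ j, seqJoinEnt ν T (P j) s n := by
  have hswap : (join fun (i : Finset.range n) ω => T^[s i] ⁻¹' join P ω)
      = (join fun j (ω : Finset.range n → ι) =>
          join (fun (i : Finset.range n) a => T^[s i] ⁻¹' P j a) ω) ∘
        Equiv.piComm fun (_ : Finset.range n) (_ : J) => ι := by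
    ext ω x
    simp only [join, Function.comp_apply, Set.mem_iInter, Set.mem_preimage]
    exact forall_comm
  rw [seqJoinEnt_eq_entropy, hswap, entropy_comp_equiv]
  exact entropy_join_le fun j => (hP j).iterate_join hT n

lemma IsEntGenSeq.of_le_mul_add {Y' : Type*} [MeasurableSpace Y'] {ν' : Measure Y'}
    [IsProbabilityMeasure ν'] {T' : Y' → Y'} {Q : κ → Set Y'} (hs : IsEntGenSeq ν' T' Q s)
    [IsProbabilityMeasure ν] {P : ι → Set Y} (hP : IsPartition P) (hT : Measurable T)
    {A φ : ℝ} (hA : 0 < A) (hφ : φ < atTop.liminf fun n : ℕ => seqJoinEnt ν' T' Q s n / n)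
    (h : ∀ n : ℕ, seqJoinEnt ν' T' Q s n ≤ A * seqJoinEnt ν T P s n + n * φ) :
    IsEntGenSeq ν T P s := by
  have hu : ∀ n : ℕ, 0 ≤ seqJoinEnt ν' T' Q s n / n := fun n =>
    div_nonneg (seqJoinEnt_nonneg Q n) n.cast_nonneg
  have hv : ∀ n : ℕ, seqJoinEnt ν T P s n / n ≤ log (Fintype.card ι) := fun n =>
    div_le_of_le_mul₀ n.cast_nonneg (log_natCast_nonneg _)
      ((hP.seqJoinEnt_le hT n).trans_eq (mul_comm _ _))
  refine ⟨hs.1, liminf_pos_of_le_mul_add hA hu hv ?_ hφ⟩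
  filter_upwards [eventually_gt_atTop 0] with n hn
  have hn' : (0 : ℝ) < n := by exact_mod_cast hn
  rw [div_le_iff₀ hn', add_mul, mul_assoc, div_mul_cancel₀ _ hn'.ne']
  linarith [h n]

end Sequence

section Dimension

variable {Y : Type*} [MeasurableSpace Y] {ν : Measure Y} {T : Y → Y} {s : ℕ → ℕ}

lemma dimExprSup_two_eq_zero (hs : IsPosSeq s) : dimExprSup s 2 = 0 := by
  have hle : ∀ n : ℕ, ((n : ℝ≥0∞) + 1) / (s n : ℝ≥0∞) ^ (2 : ℝ) ≤ ((n : ℝ≥0∞) + 1)⁻¹ := by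
    intro n
    have hsn : ((n : ℝ≥0∞) + 1) ≤ s n := by
      exact_mod_cast (Nat.add_le_add_left hs.2 n).trans (hs.1.add_le_nat n 0)
    have h0 : ((n : ℝ≥0∞) + 1) ≠ 0 := by positivity
    have htop : ((n : ℝ≥0∞) + 1) ≠ ⊤ := by simp
    calc ((n : ℝ≥0∞) + 1) / (s n : ℝ≥0∞) ^ (2 : ℝ)
        ≤ ((n : ℝ≥0∞) + 1) / ((n : ℝ≥0∞) + 1) ^ (2 : ℝ) := by gcongr
      _ = ((n : ℝ≥0∞) + 1)⁻¹ := by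
        rw [ENNReal.rpow_two, pow_two, ENNReal.div_eq_inv_mul, ENNReal.mul_inv (by simp [h0])
          (by simp [htop]), mul_assoc, ENNReal.inv_mul_cancel h0 htop, mul_one]
  have hlim : Tendsto (fun n : ℕ => ((n : ℝ≥0∞) + 1)⁻¹) atTop (𝓝 0) := by
    simpa [Function.comp_def] using
      ENNReal.tendsto_inv_nat_nhds_zero.comp (tendsto_add_atTop_nat 1)
  exact (tendsto_of_tendsto_of_tendsto_of_le_of_le tendsto_const_nhds hlim
    (fun _ => bot_le) hle).limsup_eq

lemma upperDim_nonneg (s : ℕ → ℕ) : 0 ≤ upperDim s :=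
  Real.sInf_nonneg fun _ hτ => hτ.1

lemma upperDim_le_two (hs : IsPosSeq s) : upperDim s ≤ 2 :=
  csInf_le ⟨0, fun _ hτ => hτ.1⟩ ⟨zero_le_two, dimExprSup_two_eq_zero hs⟩

variable {ι : Type*} [Fintype ι]

lemma bddAbove_upperDim_entGenSeq (ν : Measure Y) (T : Y → Y) (P : ι → Set Y) :
    BddAbove {d : ℝ | ∃ s, IsEntGenSeq ν T P s ∧ d = upperDim s} :=
  ⟨2, by rintro _ ⟨s, hs, rfl⟩; exact upperDim_le_two hs.1⟩

lemma upperEntDimPart_nonneg (ν : Measure Y) (T : Y → Y) (P : ι → Set Y) :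
    0 ≤ upperEntDimPart ν T P :=
  Real.sSup_nonneg <| by rintro _ ⟨s, -, rfl⟩; exact upperDim_nonneg s

lemma upperEntDimPart_le_two (ν : Measure Y) (T : Y → Y) (P : ι → Set Y) :
    upperEntDimPart ν T P ≤ 2 :=
  Real.sSup_le (by rintro _ ⟨s, hs, rfl⟩; exact upperDim_le_two hs.1) zero_le_two

lemma upperEntDim_nonneg (ν : Measure Y) (T : Y → Y) : 0 ≤ upperEntDim ν T :=
  Real.sSup_nonneg <| by rintro _ ⟨k, P, -, rfl⟩; exact upperEntDimPart_nonneg ν T P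

lemma upperDim_le_upperEntDim {P : ι → Set Y} (hP : IsPartition P)
    (hs : IsEntGenSeq ν T P s) : upperDim s ≤ upperEntDim ν T := by
  let e := (Fintype.equivFin ι).symm
  have hse : IsEntGenSeq ν T (P ∘ e) s := by
    simpa only [IsEntGenSeq, seqJoinEnt_comp_equiv] using hs
  calc upperDim s ≤ upperEntDimPart ν T (P ∘ e) :=
        le_csSup (bddAbove_upperDim_entGenSeq ν T _) ⟨s, hse, rfl⟩
    _ ≤ upperEntDim ν T :=
        le_csSup ⟨2, by rintro _ ⟨k, P, -, rfl⟩; exact upperEntDimPart_le_two ν T P⟩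
          ⟨_, P ∘ e, hP.comp_equiv e, rfl⟩

lemma upperEntDim_le {a : ℝ} (ha : 0 ≤ a) (h : ∀ (k : ℕ) (P : Fin k → Set Y) (s : ℕ → ℕ),
    IsPartition P → IsEntGenSeq ν T P s → upperDim s ≤ a) : upperEntDim ν T ≤ a :=
  Real.sSup_le (by
    rintro _ ⟨k, P, hP, rfl⟩
    exact Real.sSup_le (by rintro _ ⟨s, hs, rfl⟩; exact h k P s hP hs) ha) ha

end Dimension

lemma IsPartition.exists_isPartition_mem_close {α : Type*} [mα : MeasurableSpace α]
    {μ : Measure α} [IsFiniteMeasure μ] {C : Set (Set α)} (hC : IsSetRing C)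
    (hCuniv : Set.univ ∈ C) (hgen : mα = MeasurableSpace.generateFrom C)
    {ι : Type*} [Fintype ι] [LinearOrder ι] [LocallyFiniteOrderBot ι] {Q : ι → Set α}
    (hQ : IsPartition Q) {ε : ℝ≥0∞} (hε : 0 < ε) :
    ∃ R : ι → Set α, IsPartition R ∧ (∀ a, R a ∈ C) ∧ μ (⋃ a, Q a \ R a) ≤ ε := by
  have hδ : 0 < ε / Fintype.card ι := ENNReal.div_pos hε.ne' (ENNReal.natCast_ne_top _)
  choose B hBC hB using fun a => exists_measure_symmDiff_lt_of_generateFrom_isSetRing (μ := μ)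
    hC ⟨{Set.univ}, Set.countable_singleton _, by simpa using hCuniv, by simp⟩ hgen (hQ.1 a) hδ
  -- Enlarging every `B a` by the points outside all of them makes `disjointed B'` a cover.
  set B' : ι → Set α := fun a => B a ∪ (Set.univ \ ⋃ b ∈ Finset.univ, B b)
  have hRC : ∀ a, disjointed B' a ∈ C := hC.disjointed_mem fun a =>
    hC.union_mem (hBC a) (hC.sdiff_mem hCuniv (hC.biUnion_mem _ fun b _ => hBC b))
  have hcov : ∀ x, ∃ a, x ∈ B' a := by
    intro x
    by_cases hx : ∃ b, x ∈ B b
    · obtain ⟨b, hb⟩ := hx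
      exact ⟨b, Or.inl hb⟩
    · exact ⟨(hQ.exists_mem x).choose, Or.inr ⟨trivial, by simpa using hx⟩⟩
  have hR : IsPartition (disjointed B') :=
    ⟨fun a => hgen ▸ MeasurableSpace.measurableSet_generateFrom (hRC a), disjoint_disjointed B',
      by rw [iUnion_disjointed]; exact Set.eq_univ_of_forall fun x => Set.mem_iUnion.2 (hcov x)⟩
  have hsub : ⋃ a, Q a \ disjointed B' a ⊆ ⋃ b, B b ∆ Q b := by
    intro x hx
    obtain ⟨a, hxQ, hxR⟩ := Set.mem_iUnion.1 hx
    obtain ⟨b, hxb⟩ := hR.exists_mem x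
    have hab : a ≠ b := fun h => hxR (h ▸ hxb)
    rcases disjointed_subset B' b hxb with hxB | ⟨-, hxB⟩
    · exact Set.mem_iUnion.2 ⟨b, Or.inl ⟨hxB, fun hxQb => hab (hQ.eq_of_mem hxQ hxQb)⟩⟩
    · exact Set.mem_iUnion.2
        ⟨a, Or.inr ⟨hxQ, fun h => hxB (Set.mem_biUnion (Finset.mem_univ a) h)⟩⟩
  refine ⟨disjointed B', hR, hRC, ?_⟩
  calc μ (⋃ a, Q a \ disjointed B' a) ≤ ∑ b, μ (B b ∆ Q b) :=
        (measure_mono hsub).trans (measure_iUnion_fintype_le _ _)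
    _ ≤ ∑ _b : ι, ε / Fintype.card ι := Finset.sum_le_sum fun b _ => (hB b).le
    _ ≤ ε := by simpa using ENNReal.mul_div_le

section Cylinder

open scoped Classical

variable {I X : Type*} {F F' : Finset I} {𝒮 𝒮' : Finset (Set X)}

def pattern (𝒮 : Finset (Set X)) (x : X) (S : 𝒮) : Bool := x ∈ (S : Set X)

def atom (𝒮 : Finset (Set X)) (b : 𝒮 → Bool) : Set X := pattern 𝒮 ⁻¹' {b}

def cylinderCell (F : Finset I) (𝒮 : Finset (Set X)) : (F → 𝒮 → Bool) → Set (I → X) :=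
  join fun (j : F) b => (fun x : I → X => x j) ⁻¹' atom 𝒮 b

lemma mem_cylinderCell {x : I → X} {w : F → 𝒮 → Bool} :
    x ∈ cylinderCell F 𝒮 w ↔ ∀ j : F, pattern 𝒮 (x j) = w j := by
  simp [cylinderCell, join, atom]

def DeterminedBy (F : Finset I) (𝒮 : Finset (Set X)) (A : Set (I → X)) : Prop :=
  ∀ ⦃x y : I → X⦄, (∀ j ∈ F, ∀ S ∈ 𝒮, x j ∈ S ↔ y j ∈ S) → x ∈ A → y ∈ A

namespace DeterminedBy

variable {A B : Set (I → X)}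

lemma mono (h : DeterminedBy F 𝒮 A) (hF : F ⊆ F') (h𝒮 : 𝒮 ⊆ 𝒮') : DeterminedBy F' 𝒮' A :=
  fun _ _ hxy => h fun j hj S hS => hxy j (hF hj) S (h𝒮 hS)

lemma union (hA : DeterminedBy F 𝒮 A) (hB : DeterminedBy F 𝒮 B) : DeterminedBy F 𝒮 (A ∪ B) :=
  fun _ _ hxy => Or.imp (hA hxy) (hB hxy)

lemma diff (hA : DeterminedBy F 𝒮 A) (hB : DeterminedBy F 𝒮 B) : DeterminedBy F 𝒮 (A \ B) :=
  fun _ _ hxy hx =>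
    ⟨hA hxy hx.1, fun hy => hx.2 (hB (fun j hj S hS => (hxy j hj S hS).symm) hy)⟩

lemma mem_of_mem_cylinderCell (h : DeterminedBy F 𝒮 A) {w : F → 𝒮 → Bool} {x y : I → X}
    (hx : x ∈ cylinderCell F 𝒮 w) (hy : y ∈ cylinderCell F 𝒮 w) (hxA : x ∈ A) : y ∈ A := by
  refine h (fun j hj S hS => ?_) hxA
  have hxy := congrFun
    ((mem_cylinderCell.1 hx ⟨j, hj⟩).trans (mem_cylinderCell.1 hy ⟨j, hj⟩).symm) ⟨S, hS⟩
  simpa [pattern] using hxy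

end DeterminedBy

variable [MeasurableSpace X]

lemma measurable_pattern (h𝒮 : ∀ S ∈ 𝒮, MeasurableSet S) : Measurable (pattern 𝒮) :=
  measurable_pi_iff.2 fun S =>
    measurable_to_bool (by simpa [pattern, Set.preimage] using h𝒮 S S.2)

lemma isPartition_atom (h𝒮 : ∀ S ∈ 𝒮, MeasurableSet S) : IsPartition (atom 𝒮) :=
  isPartition_fiber (measurable_pattern h𝒮)

lemma isPartition_cylinderCell (h𝒮 : ∀ S ∈ 𝒮, MeasurableSet S) :
    IsPartition (cylinderCell F 𝒮) :=
  isPartition_join fun _ => (isPartition_atom h𝒮).preimage (measurable_pi_apply _)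

lemma DeterminedBy.measurableSet {A : Set (I → X)} (h𝒮 : ∀ S ∈ 𝒮, MeasurableSet S)
    (h : DeterminedBy F 𝒮 A) : MeasurableSet A := by
  have hA : A = ⋃ w ∈ {w | ∃ x ∈ A, x ∈ cylinderCell F 𝒮 w}, cylinderCell F 𝒮 w := by
    ext y
    simp only [Set.mem_iUnion, exists_prop]
    refine ⟨fun hy => ⟨fun j => pattern 𝒮 (y j), ⟨y, hy, mem_cylinderCell.2 fun _ => rfl⟩,
      mem_cylinderCell.2 fun _ => rfl⟩, ?_⟩
    rintro ⟨w, ⟨x, hxA, hx⟩, hy⟩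
    exact h.mem_of_mem_cylinderCell hx hy hxA
  rw [hA]
  exact .biUnion (Set.to_countable _) fun w _ => (isPartition_cylinderCell h𝒮).1 w

lemma exists_cylinderCell_subset {ι : Type*} [Nonempty ι] [Fintype ι] {R : ι → Set (I → X)}
    (hR : IsPartition R) (hdet : ∀ a, DeterminedBy F 𝒮 (R a)) (w : F → 𝒮 → Bool) :
    ∃ a, cylinderCell F 𝒮 w ⊆ R a := by
  by_cases hw : (cylinderCell F 𝒮 w).Nonempty
  · obtain ⟨x, hx⟩ := hw
    obtain ⟨a, ha⟩ := hR.exists_mem x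
    exact ⟨a, fun y hy => (hdet a).mem_of_mem_cylinderCell hx hy ha⟩
  · exact ⟨Classical.arbitrary ι, fun y hy => (hw ⟨y, hy⟩).elim⟩

variable (I X) in
def finitelyDeterminedSets : Set (Set (I → X)) :=
  {A | ∃ (F : Finset I) (𝒮 : Finset (Set X)), (∀ S ∈ 𝒮, MeasurableSet S) ∧ DeterminedBy F 𝒮 A}

lemma isSetRing_finitelyDeterminedSets : IsSetRing (finitelyDeterminedSets I X) := by
  have common : ∀ {A B}, A ∈ finitelyDeterminedSets I X → B ∈ finitelyDeterminedSets I X →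
      ∃ (F : Finset I) (𝒮 : Finset (Set X)), (∀ S ∈ 𝒮, MeasurableSet S) ∧
        DeterminedBy F 𝒮 A ∧ DeterminedBy F 𝒮 B := by
    rintro A B ⟨F, 𝒮, h𝒮, hA⟩ ⟨F', 𝒮', h𝒮', hB⟩
    refine ⟨F ∪ F', 𝒮 ∪ 𝒮', fun S hS => ?_, hA.mono Finset.subset_union_left
      Finset.subset_union_left, hB.mono Finset.subset_union_right Finset.subset_union_right⟩
    rcases Finset.mem_union.1 hS with hS | hS
    exacts [h𝒮 S hS, h𝒮' S hS]
  refine ⟨⟨∅, ∅, by simp, fun _ _ _ h => h⟩, fun A B hA hB => ?_, fun A B hA hB => ?_⟩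
  · obtain ⟨F, 𝒮, h𝒮, hA, hB⟩ := common hA hB
    exact ⟨F, 𝒮, h𝒮, hA.union hB⟩
  · obtain ⟨F, 𝒮, h𝒮, hA, hB⟩ := common hA hB
    exact ⟨F, 𝒮, h𝒮, hA.diff hB⟩

lemma univ_mem_finitelyDeterminedSets : Set.univ ∈ finitelyDeterminedSets I X :=
  ⟨∅, ∅, by simp, fun _ _ _ h => h⟩

lemma pi_eq_generateFrom_finitelyDeterminedSets :
    (MeasurableSpace.pi : MeasurableSpace (I → X)) =
      MeasurableSpace.generateFrom (finitelyDeterminedSets I X) := by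
  refine le_antisymm ?_ (MeasurableSpace.generateFrom_le fun A ⟨F, 𝒮, h𝒮, hA⟩ =>
    hA.measurableSet h𝒮)
  rw [MeasurableSpace.pi_eq_generateFrom_projections]
  refine MeasurableSpace.generateFrom_le ?_
  rintro _ ⟨i, S, hS, rfl⟩
  exact MeasurableSpace.measurableSet_generateFrom
    ⟨{i}, {S}, by simpa using hS, fun x y hxy => (hxy i (by simp) S (by simp)).1⟩

lemma IsPartition.exists_determinedBy_close {μ : Measure (I → X)} [IsFiniteMeasure μ]
    {ι : Type*} [Fintype ι] [LinearOrder ι] [LocallyFiniteOrderBot ι] {Q : ι → Set (I → X)}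
    (hQ : IsPartition Q) {ε : ℝ≥0∞} (hε : 0 < ε) :
    ∃ (R : ι → Set (I → X)) (F : Finset I) (𝒮 : Finset (Set X)), IsPartition R ∧
      (∀ S ∈ 𝒮, MeasurableSet S) ∧ (∀ a, DeterminedBy F 𝒮 (R a)) ∧
      μ (⋃ a, Q a \ R a) ≤ ε := by
  obtain ⟨R, hR, hRC, hclose⟩ := hQ.exists_isPartition_mem_close (μ := μ)
    isSetRing_finitelyDeterminedSets univ_mem_finitelyDeterminedSets
    pi_eq_generateFrom_finitelyDeterminedSets hε
  choose F 𝒮 h𝒮 hdet using hRC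
  refine ⟨R, Finset.univ.biUnion F, Finset.univ.biUnion 𝒮, hR, fun S hS => ?_,
    fun a => (hdet a).mono (Finset.subset_biUnion_of_mem F (Finset.mem_univ a))
      (Finset.subset_biUnion_of_mem 𝒮 (Finset.mem_univ a)), hclose⟩
  obtain ⟨a, -, hSa⟩ := Finset.mem_biUnion.1 hS
  exact h𝒮 a S hSa

end Cylinder

section SelfJoining

open scoped Classical

variable {I X : Type*} [MeasurableSpace X] {μ : Measure X} {T : X → X} {η : Measure (I → X)}
  {s : ℕ → ℕ}

lemma measurable_coordwise (hT : Measurable T) : Measurable fun (x : I → X) i => T (x i) :=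
  measurable_pi_lambda _ fun i => hT.comp (measurable_pi_apply i)

lemma seqJoinEnt_preimage_eval (hT : Measurable T)
    (hmarg : ∀ i, η.map (fun x : I → X => x i) = μ) {ι : Type*} [Fintype ι] {P : ι → Set X}
    (hP : ∀ a, MeasurableSet (P a)) (j : I) (n : ℕ) :
    seqJoinEnt η (fun x i => T (x i)) (fun a => (fun x : I → X => x j) ⁻¹' P a) s n
      = seqJoinEnt μ T P s n := by
  refine Finset.sum_congr rfl fun ω _ => congrArg negMulLog ?_
  have hcell : (⋂ i : Finset.range n,
        (fun (x : I → X) i => T (x i))^[s i] ⁻¹' ((fun x : I → X => x j) ⁻¹' P (ω i)))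
      = (fun x : I → X => x j) ⁻¹' ⋂ i : Finset.range n, T^[s i] ⁻¹' P (ω i) := by
    ext x
    simp only [Set.mem_iInter, Set.mem_preimage]
    refine forall_congr' fun i => ?_
    rw [show (fun (x : I → X) i => T (x i)) = Pi.map fun _ => T from rfl, Pi.map_iterate]
    rfl
  rw [← measureReal_def, ← measureReal_def, hcell]
  exact MeasurePreserving.measureReal_preimage ⟨measurable_pi_apply j, hmarg j⟩
    (MeasurableSet.iInter fun i => hT.iterate _ (hP _)).nullMeasurableSet

lemma seqJoinEnt_le_card_mul_of_determinedBy [IsProbabilityMeasure η] (hT : Measurable T)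
    (hmarg : ∀ i, η.map (fun x : I → X => x i) = μ) {F : Finset I} {𝒮 : Finset (Set X)}
    (h𝒮 : ∀ S ∈ 𝒮, MeasurableSet S) {ι : Type*} [Fintype ι] {R : ι → Set (I → X)}
    (hR : IsPartition R) (hdet : ∀ a, DeterminedBy F 𝒮 (R a)) (n : ℕ) :
    seqJoinEnt η (fun x i => T (x i)) R s n ≤ F.card * seqJoinEnt μ T (atom 𝒮) s n := by
  have := hR.nonempty_index (ν := η)
  choose u hu using exists_cylinderCell_subset hR hdet
  calc seqJoinEnt η (fun x i => T (x i)) R s n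
      ≤ seqJoinEnt η (fun x i => T (x i)) (cylinderCell F 𝒮) s n :=
        hR.seqJoinEnt_le_of_refines (isPartition_cylinderCell h𝒮) (measurable_coordwise hT) u
          hu n
    _ ≤ ∑ j : F, seqJoinEnt η (fun x i => T (x i))
          (fun b => (fun x : I → X => x j) ⁻¹' atom 𝒮 b) s n :=
        seqJoinEnt_join_le (fun _ => (isPartition_atom h𝒮).preimage (measurable_pi_apply _))
          (measurable_coordwise hT) n
    _ = F.card * seqJoinEnt μ T (atom 𝒮) s n := by
        simp [seqJoinEnt_preimage_eval hT hmarg (isPartition_atom h𝒮).1]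

lemma upperDim_le_upperEntDim_of_selfJoining [IsProbabilityMeasure μ] [IsProbabilityMeasure η]
    (hT : Measurable T) (hinv : MeasurePreserving (fun (x : I → X) i => T (x i)) η η)
    (hmarg : ∀ i, η.map (fun x : I → X => x i) = μ) {k : ℕ} {Q : Fin k → Set (I → X)}
    (hQ : IsPartition Q) (hs : IsEntGenSeq η (fun x i => T (x i)) Q s) :
    upperDim s ≤ upperEntDim μ T := by
  have := hQ.nonempty_index (ν := η)
  obtain ⟨ε, hε0, hε1, hεs⟩ := exists_fanoTerm_lt (Fintype.card (Fin k)) hs.2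
  obtain ⟨R, F, 𝒮, hR, h𝒮, hdet, hclose⟩ :=
    hQ.exists_determinedBy_close (μ := η) (ENNReal.ofReal_pos.2 hε0)
  have hclose' : η.real (⋃ a, Q a \ R a) ≤ ε := ENNReal.toReal_le_of_le_ofReal hε0.le hclose
  have hP := isPartition_atom h𝒮
  refine upperDim_le_upperEntDim hP
    (hs.of_le_mul_add hP hT (A := F.card + 1) (by positivity) hεs fun n => ?_)
  calc seqJoinEnt η _ Q s n
      ≤ seqJoinEnt η _ R s n + n * fanoTerm (Fintype.card (Fin k)) ε :=
        hQ.seqJoinEnt_le_of_close hR hinv hε0 hε1 hclose' n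
    _ ≤ (F.card + 1) * seqJoinEnt μ T (atom 𝒮) s n + n * fanoTerm (Fintype.card (Fin k)) ε := by
        have := seqJoinEnt_le_card_mul_of_determinedBy hT hmarg h𝒮 hR hdet n (s := s)
        have := seqJoinEnt_nonneg (ν := μ) (T := T) (s := s) (atom 𝒮) n
        nlinarith

lemma upperEntDim_le_of_selfJoining [IsProbabilityMeasure μ] [IsProbabilityMeasure η]
    (hT : Measurable T) (hinv : MeasurePreserving (fun (x : I → X) i => T (x i)) η η)
    (hmarg : ∀ i, η.map (fun x : I → X => x i) = μ) :
    upperEntDim η (fun x i => T (x i)) ≤ upperEntDim μ T :=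
  upperEntDim_le (upperEntDim_nonneg μ T) fun _ _ _ hQ hs =>
    upperDim_le_upperEntDim_of_selfJoining hT hinv hmarg hQ hs

lemma upperEntDim_le_selfJoining (hT : Measurable T)
    (hmarg : ∀ i, η.map (fun x : I → X => x i) = μ) (j : I) :
    upperEntDim μ T ≤ upperEntDim η (fun x i => T (x i)) :=
  upperEntDim_le (upperEntDim_nonneg _ _) fun _ _ _ hP hs =>
    upperDim_le_upperEntDim (hP.preimage (measurable_pi_apply j))
      (by simpa only [IsEntGenSeq, seqJoinEnt_preimage_eval hT hmarg hP.1 j] using hs)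

end SelfJoining

/-- If `η` is a ℤ-fold self-joining of `(X,𝔅,μ,T)` — a
`T^ℤ`-invariant probability measure on `X^ℤ` all of whose coordinate marginals are
`μ` — then `D̄_η(X^ℤ, T^ℤ) = D̄_μ(X,T)`. -/
theorem upperEntDim_selfJoining {X : Type*} [MeasurableSpace X]
    (μ : Measure X) [IsProbabilityMeasure μ] (T : X → X) (hT : MeasurePreserving T μ μ)
    (η : Measure (ℤ → X)) [IsProbabilityMeasure η]
    (hinv : MeasurePreserving (fun (x : ℤ → X) (i : ℤ) => T (x i)) η η)
    (hmarg : ∀ i : ℤ, η.map (fun x : ℤ → X => x i) = μ) :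
    upperEntDim η (fun (x : ℤ → X) (i : ℤ) => T (x i)) = upperEntDim μ T :=
  le_antisymm (upperEntDim_le_of_selfJoining hT.measurable hinv hmarg)
    (upperEntDim_le_selfJoining hT.measurable hmarg 0)

end EntDim
end
end

section
/- Let π : (X,𝔅,μ,T) → (Y,𝒟,ν,S) be a factor map between measure-preserving systems, i.e. a measurable map π:X→Y with π_*μ = ν and π∘T = S∘π μ-almost everywhere. Then the dimension sets satisfy Dims_ν(Y,S) ⊆ Dims_μ(X,T); in particular, for every B ∈ 𝒟 with 0 < ν(B) < 1, D̄_ν(S,{B, Y∖B}) = D̄_μ(T,{π⁻¹B, X∖π⁻¹B}). Hence the dimension set, and the upper metric entropy dimension, are invariants of measurable isomorphism. -/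
open MeasureTheory Filter Set
open scoped ENNReal symmDiff

noncomputable section

namespace EntDim

/-- For a factor map `π : (X,μ,T) → (Y,ν,S)`, two-set partitions of
the factor pull back with the same upper entropy dimension, and consequently
`Dims_ν(Y,S) ⊆ Dims_μ(X,T)`. -/
theorem dimsSet_factor {X Y : Type*} [MeasurableSpace X] [MeasurableSpace Y]
    (μ : Measure X) [IsProbabilityMeasure μ] (T : X → X) (hT : MeasurePreserving T μ μ)
    (ν : Measure Y) [IsProbabilityMeasure ν] (S : Y → Y) (hS : MeasurePreserving S ν ν)
    (π : X → Y) (hπ : Measurable π) (hpush : μ.map π = ν)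
    (heq : ∀ᵐ x ∂μ, π (T x) = S (π x)) :
    (∀ B : Set Y, MeasurableSet B → 0 < ν B → ν B < 1 →
      upperEntDimPart ν S (pairPart B) = upperEntDimPart μ T (pairPart (π ⁻¹' B))) ∧
    dimsSet ν S ⊆ dimsSet μ T := by
  -- a.e. intertwining of iterates
  have hiter : ∀ k : ℕ, ∀ᵐ x ∂μ, π (T^[k] x) = S^[k] (π x) := by
    intro k
    induction k with
    | zero => filter_upwards with x; simp
    | succ k ih =>
      have h1 : ∀ᵐ x ∂μ, π (T^[k] (T x)) = S^[k] (π (T x)) := by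
        have h2 : ∀ᵐ y ∂(μ.map T), π (T^[k] y) = S^[k] (π y) := hT.map_eq.symm ▸ ih
        exact ae_of_ae_map hT.measurable.aemeasurable h2
      filter_upwards [h1, heq] with x h1 h2
      rw [Function.iterate_succ_apply, h1, h2, Function.iterate_succ_apply]
  -- key: entropies of pulled-back partitions agree
  have hkey : ∀ (P : Fin 2 → Set Y), (∀ i, MeasurableSet (P i)) →
      ∀ (f : ℕ → ℕ) (F : Finset ℕ),
      finJoinEnt ν S P f F = finJoinEnt μ T (fun i => π ⁻¹' P i) f F := by
    intro P hP f F
    unfold finJoinEnt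
    refine Finset.sum_congr rfl fun ω _ => ?_
    congr 2
    have hae : ∀ᵐ x ∂μ, ∀ i : F, π (T^[f i.1] x) = S^[f i.1] (π x) :=
      ae_all_iff.mpr fun i => hiter (f i.1)
    have hM : MeasurableSet (⋂ i : F, S^[f i.1] ⁻¹' P (ω i)) :=
      MeasurableSet.iInter fun i => (hS.measurable.iterate (f i.1)) (hP (ω i))
    have hsets : (⋂ i : F, T^[f i.1] ⁻¹' ((fun i => π ⁻¹' P i) (ω i)))
        =ᵐ[μ] π ⁻¹' (⋂ i : F, S^[f i.1] ⁻¹' P (ω i)) := by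
      rw [Filter.eventuallyEq_set]
      filter_upwards [hae] with x hx
      simp only [Set.mem_iInter, Set.mem_preimage]
      exact forall_congr' fun i => by rw [hx i]
    rw [measure_congr hsets, ← hpush, Measure.map_apply hπ hM]
  have hpair : ∀ B : Set Y, (fun i => π ⁻¹' pairPart B i) = pairPart (π ⁻¹' B) := by
    intro B
    funext i
    fin_cases i <;> simp [pairPart]
  have hmain : ∀ B : Set Y, MeasurableSet B →
      upperEntDimPart ν S (pairPart B) = upperEntDimPart μ T (pairPart (π ⁻¹' B)) := by
    intro B hB
    have hPmeas : ∀ i, MeasurableSet (pairPart B i) := by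
      intro i; fin_cases i <;> simp [pairPart, hB, hB.compl]
    have hgen : ∀ s : ℕ → ℕ, IsEntGenSeq ν S (pairPart B) s ↔
        IsEntGenSeq μ T (pairPart (π ⁻¹' B)) s := by
      intro s
      unfold IsEntGenSeq seqJoinEnt
      rw [← hpair B]
      constructor <;> rintro ⟨h1, h2⟩ <;> refine ⟨h1, ?_⟩
      · convert h2 using 3 with n
        rw [hkey _ hPmeas]
      · convert h2 using 3 with n
        rw [hkey _ hPmeas]
    unfold upperEntDimPart
    congr 1
    ext d
    simp only [Set.mem_setOf_eq]
    exact exists_congr fun s => and_congr_left' (hgen s)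
  refine ⟨fun B hB _ _ => hmain B hB, ?_⟩
  rintro d ⟨B, hB, hB0, hB1, rfl⟩
  refine ⟨π ⁻¹' B, hπ hB, ?_, ?_, ?_⟩
  · rw [← Measure.map_apply hπ hB, hpush]; exact hB0
  · rw [← Measure.map_apply hπ hB, hpush]; exact hB1
  · exact hmain B hB

end EntDim
end
end
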